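/- For every integer l ≥ 0, the weighted inner product satisfies ⟨φ_{l+2}, φ_l⟩_ω = ⟨φ_l, φ_{l+2}⟩_ω = -π[(l+2)(l+5) + (l+1)(l+4)] / ((l+3)(l+5)). -/

import Mathlib

open MeasureTheory

/-- The Chebyshev weight `ω(ξ) = (1 - ξ²)^(-1/2)`. -/
noncomputable def chebW (ξ : ℝ) : ℝ := (1 - ξ ^ 2) ^ (-(1 : ℝ) / 2)

/-- The degree-`k` Chebyshev polynomial of the first kind, as a function `ℝ → ℝ`. -/
noncomputable def chebT (k : ℕ) (ξ : ℝ) : ℝ := (Polynomial.Chebyshev.T ℝ k).eval ξ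

/-- The weighted inner product `⟨f, g⟩_ω = ∫_{-1}^{1} f(ξ) g(ξ) ω(ξ) dξ`. -/
noncomputable def ipw (f g : ℝ → ℝ) : ℝ := ∫ ξ in (-1 : ℝ)..1, f ξ * g ξ * chebW ξ

/-- The basis functions
`φ_k(ξ) = T_k(ξ) - (2(k+2)/(k+3)) T_{k+2}(ξ) + ((k+1)/(k+3)) T_{k+4}(ξ)`. -/
noncomputable def phiFun (k : ℕ) (ξ : ℝ) : ℝ :=
  chebT k ξ - (2 * ((k : ℝ) + 2) / ((k : ℝ) + 3)) * chebT (k + 2) ξ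
    + (((k : ℝ) + 1) / ((k : ℝ) + 3)) * chebT (k + 4) ξ


/-
Under `ξ = cos θ` the Chebyshev weight becomes `dθ` on `[0, π]`, so the `T_k` are orthogonal
for `⟨·,·⟩_ω` with `⟨T_m, T_m⟩_ω = π / 2` for `m ≥ 1`. Expanding `φ_l` and `φ_{l+2}` bilinearly,
only the pairings `T_{l+2}·T_{l+2}` and `T_{l+4}·T_{l+4}` survive, with coefficients
`-2(l+2)/(l+3)` and `-((l+1)/(l+3))·(2(l+4)/(l+5))`.
-/

open Polynomial.Chebyshev Real

-- Off `[-1, 1]` both sides are `0`: `√` truncates, and `Real.rpow` of a negative base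
-- carries the factor `cos (-π / 2) = 0`.
lemma chebW_eq_sqrt_inv (ξ : ℝ) : chebW ξ = √(1 - ξ ^ 2)⁻¹ := by
  rcases le_or_gt 0 (1 - ξ ^ 2) with h | h
  · rw [chebW, Real.sqrt_inv, Real.sqrt_eq_rpow, ← Real.rpow_neg h]
    norm_num
  · rw [chebW, Real.sqrt_eq_zero_of_nonpos (inv_nonpos.mpr h.le), Real.rpow_def_of_neg h,
      show -(1 : ℝ) / 2 * π = -(π / 2) by ring, cos_neg, cos_pi_div_two, mul_zero]

lemma ipw_eq_integral_measureT (f g : ℝ → ℝ) : ipw f g = ∫ x, f x * g x ∂measureT := by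
  simp only [integral_measureT, ipw, chebW_eq_sqrt_inv]

lemma ipw_comm (f g : ℝ → ℝ) : ipw f g = ipw g f := by
  simp only [ipw, mul_comm (f _)]

@[fun_prop]
lemma continuous_chebT (k : ℕ) : Continuous (chebT k) :=
  (T ℝ k).continuous

lemma continuous_phiFun (k : ℕ) : Continuous (phiFun k) := by
  unfold phiFun
  fun_prop

lemma ipw_chebT_chebT {m n : ℕ} (hm : m ≠ 0) :
    ipw (chebT m) (chebT n) = if m = n then π / 2 else 0 := by
  rw [ipw_eq_integral_measureT]
  split_ifs with h
  · subst h
    exact integral_T_real_mul_self_measureT_of_ne_zero hm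
  · exact integral_eval_T_real_mul_eval_T_real_measureT_of_ne h

lemma ipw_phiFun_right {f : ℝ → ℝ} (hf : ContinuousOn f (Set.Icc (-1) 1)) (k : ℕ) :
    ipw f (phiFun k) = ipw f (chebT k) - 2 * (k + 2) / (k + 3) * ipw f (chebT (k + 2))
      + (k + 1) / (k + 3) * ipw f (chebT (k + 4)) := by
  have hint (j : ℕ) : Integrable (fun x => f x * chebT j x) measureT :=
    integrable_measureT (hf.mul (continuous_chebT j).continuousOn)
  have hexpand (x : ℝ) : f x * phiFun k x = f x * chebT k x
      - 2 * (k + 2) / (k + 3) * (f x * chebT (k + 2) x)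
      + (k + 1) / (k + 3) * (f x * chebT (k + 4) x) := by
    rw [phiFun]; ring
  simp only [ipw_eq_integral_measureT, hexpand]
  rw [integral_add, integral_sub, integral_const_mul, integral_const_mul]
  · exact hint k
  · exact (hint _).const_mul _
  · exact (hint k).sub ((hint _).const_mul _)
  · exact (hint _).const_mul _

/-- For every `l ≥ 0`,
`⟨φ_{l+2}, φ_l⟩_ω = ⟨φ_l, φ_{l+2}⟩_ω = -π[(l+2)(l+5) + (l+1)(l+4)] / ((l+3)(l+5))`. -/
theorem ipw_phiFun_second_diagonal (l : ℕ) :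
    ipw (phiFun (l + 2)) (phiFun l) =
      -(Real.pi * (((l : ℝ) + 2) * ((l : ℝ) + 5) + ((l : ℝ) + 1) * ((l : ℝ) + 4)))
        / (((l : ℝ) + 3) * ((l : ℝ) + 5)) ∧
    ipw (phiFun l) (phiFun (l + 2)) =
      -(Real.pi * (((l : ℝ) + 2) * ((l : ℝ) + 5) + ((l : ℝ) + 1) * ((l : ℝ) + 4)))
        / (((l : ℝ) + 3) * ((l : ℝ) + 5)) := by
  suffices h : ipw (phiFun l) (phiFun (l + 2)) = _ from ⟨ipw_comm _ _ ▸ h, h⟩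
  rw [ipw_phiFun_right (continuous_phiFun l).continuousOn]
  simp only [ipw_comm (phiFun l), ipw_phiFun_right (continuous_chebT _).continuousOn,
    ipw_chebT_chebT (show l + 2 ≠ 0 by omega), ipw_chebT_chebT (show l + 2 + 2 ≠ 0 by omega),
    ipw_chebT_chebT (show l + 2 + 4 ≠ 0 by omega)]
  simp (disch := omega) only [if_true, if_neg]
  push_cast
  field_simp
  ring
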